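/- arXiv:2501.13627 — 5 statements merged into one kernel-verified Lean document; each statement's English description precedes it below -/
import Mathlib

section
/- For m = 2 and v₀ = 0, for linearly independent v₁, v₂ ∈ ℝ^N, the quantity Λ(0, v₁, v₂) equals max{|v₁|, |v₂|} / sqrt(|v₁|²|v₂|² − ⟨v₁,v₂⟩²). -/
/-!
Write `D = ‖u‖²‖v‖² - ⟪u, v⟫²` for the Gram determinant and `w = ‖v‖² u - ⟪u, v⟫ v`, so that
`⟪a u + b v, w⟫ = a D` and `‖w‖² = ‖v‖² D`. Cauchy–Schwarz against `w` gives `|a| ≤ ‖v‖ / √D` whenever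
`‖a u + b v‖ = 1`, and symmetrically `|b| ≤ ‖u‖ / √D`. Equality is attained at the unit vector
`w / ‖w‖`, whose other coefficient is the smaller one when `‖u‖ ≤ ‖v‖`.
-/

open scoped RealInnerProductSpace

variable {E : Type*} [NormedAddCommGroup E] [InnerProductSpace ℝ E]

def gramDet (u v : E) : ℝ := ‖u‖ ^ 2 * ‖v‖ ^ 2 - ⟪u, v⟫ ^ 2

/-- `‖v‖²` times the component of `u` orthogonal to `v`. -/
def perpComponent (u v : E) : E := ‖v‖ ^ 2 • u - ⟪u, v⟫ • v

lemma gramDet_comm (u v : E) : gramDet u v = gramDet v u := by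
  rw [gramDet, gramDet, real_inner_comm]
  ring

lemma gramDet_nonneg (u v : E) : 0 ≤ gramDet u v := by
  have hCS := real_inner_mul_inner_self_le u v
  rw [real_inner_self_eq_norm_sq, real_inner_self_eq_norm_sq] at hCS
  rw [gramDet]
  nlinarith

lemma inner_smul_add_smul_perpComponent (a b : ℝ) (u v : E) :
    ⟪a • u + b • v, perpComponent u v⟫ = a * gramDet u v := by
  simp only [perpComponent, gramDet, inner_add_left, inner_sub_right, real_inner_smul_left,
    real_inner_smul_right, real_inner_self_eq_norm_sq, real_inner_comm u v]
  ring

lemma norm_perpComponent_sq (u v : E) : ‖perpComponent u v‖ ^ 2 = ‖v‖ ^ 2 * gramDet u v := by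
  rw [← real_inner_self_eq_norm_sq]
  simp only [perpComponent, gramDet, inner_sub_left, inner_sub_right, real_inner_smul_left,
    real_inner_smul_right, real_inner_self_eq_norm_sq, real_inner_comm u v, norm_smul, mul_pow,
    Real.norm_eq_abs, sq_abs]
  ring

lemma gramDet_pos {u v : E} (h : LinearIndependent ℝ ![u, v]) : 0 < gramDet u v := by
  have hv : v ≠ 0 := h.ne_zero 1
  have hw : perpComponent u v ≠ 0 := fun hw ↦ by
    have hcoeff := LinearIndependent.pair_iff.mp h (‖v‖ ^ 2) (-⟪u, v⟫)
      (by rwa [neg_smul, ← sub_eq_add_neg])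
    exact hv (by simpa using hcoeff.1)
  have hw_sq : 0 < ‖perpComponent u v‖ ^ 2 := by positivity
  rw [norm_perpComponent_sq] at hw_sq
  exact pos_of_mul_pos_right hw_sq (sq_nonneg ‖v‖)

lemma sq_mul_gramDet_le (a b : ℝ) (u v : E) :
    a ^ 2 * gramDet u v ≤ ‖v‖ ^ 2 * ‖a • u + b • v‖ ^ 2 := by
  rcases (gramDet_nonneg u v).eq_or_lt with hD | hD
  · rw [← hD, mul_zero]
    positivity
  have hCS := real_inner_mul_inner_self_le (a • u + b • v) (perpComponent u v)
  rw [inner_smul_add_smul_perpComponent, real_inner_self_eq_norm_sq,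
    real_inner_self_eq_norm_sq, norm_perpComponent_sq] at hCS
  nlinarith

lemma abs_le_div_sqrt_gramDet {a b : ℝ} {u v : E} (hD : 0 < gramDet u v)
    (h : ‖a • u + b • v‖ ≤ 1) : |a| ≤ ‖v‖ / √(gramDet u v) := by
  rw [le_div_iff₀ (Real.sqrt_pos.mpr hD)]
  calc |a| * √(gramDet u v) = √(a ^ 2 * gramDet u v) := by
        rw [Real.sqrt_mul' _ hD.le, Real.sqrt_sq_eq_abs]
    _ ≤ √(‖v‖ ^ 2) := Real.sqrt_le_sqrt <| (sq_mul_gramDet_le a b u v).trans <|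
        mul_le_of_le_one_right (sq_nonneg _) (pow_le_one₀ (norm_nonneg _) h)
    _ = ‖v‖ := Real.sqrt_sq (norm_nonneg v)

lemma exists_norm_smul_add_smul_eq_one_max_abs_eq {u v : E} (hD : 0 < gramDet u v)
    (huv : ‖u‖ ≤ ‖v‖) :
    ∃ a b : ℝ, ‖a • u + b • v‖ = 1 ∧ max |a| |b| = ‖v‖ / √(gramDet u v) := by
  set s := √(gramDet u v)
  have hs : 0 < s := Real.sqrt_pos.mpr hD
  have hv : 0 < ‖v‖ := norm_pos_iff.mpr (by rintro rfl; simp [gramDet] at hD)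
  have hw : ‖perpComponent u v‖ = ‖v‖ * s := by
    rw [← Real.sqrt_sq (norm_nonneg (perpComponent u v)), norm_perpComponent_sq,
      Real.sqrt_mul (sq_nonneg _), Real.sqrt_sq (norm_nonneg v)]
  set c := (‖v‖ * s)⁻¹
  have hc : 0 < c := inv_pos.mpr (mul_pos hv hs)
  refine ⟨c * ‖v‖ ^ 2, -(c * ⟪u, v⟫), ?_, ?_⟩
  · have hvec : (c * ‖v‖ ^ 2) • u + (-(c * ⟪u, v⟫)) • v = c • perpComponent u v := by
      rw [perpComponent, smul_sub, smul_smul, smul_smul, neg_smul, sub_eq_add_neg]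
    rw [hvec, norm_smul, hw, Real.norm_of_nonneg hc.le, inv_mul_cancel₀ (mul_pos hv hs).ne']
  · have ha : c * ‖v‖ ^ 2 = ‖v‖ / s := by simp only [c]; field_simp
    have hb : |-(c * ⟪u, v⟫)| ≤ c * ‖v‖ ^ 2 := by
      rw [abs_neg, abs_mul, abs_of_pos hc]
      gcongr
      calc |⟪u, v⟫| ≤ ‖u‖ * ‖v‖ := abs_real_inner_le_norm u v
        _ ≤ ‖v‖ ^ 2 := by nlinarith
    rw [abs_of_pos (by positivity), max_eq_left hb, ha]

theorem isGreatest_max_abs_coeff {u v : E} (h : LinearIndependent ℝ ![u, v]) :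
    IsGreatest {c : ℝ | ∃ a b : ℝ, ‖a • u + b • v‖ = 1 ∧ c = max |a| |b|}
      (max ‖u‖ ‖v‖ / √(gramDet u v)) := by
  have hD := gramDet_pos h
  have hD' : 0 < gramDet v u := gramDet_comm u v ▸ hD
  refine ⟨?_, ?_⟩
  · rcases le_total ‖u‖ ‖v‖ with huv | hvu
    · obtain ⟨a, b, hab, hmax⟩ := exists_norm_smul_add_smul_eq_one_max_abs_eq hD huv
      exact ⟨a, b, hab, by rw [hmax, max_eq_right huv]⟩
    · obtain ⟨b, a, hba, hmax⟩ := exists_norm_smul_add_smul_eq_one_max_abs_eq hD' hvu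
      exact ⟨a, b, by rwa [add_comm], by rw [max_comm |a|, hmax, max_eq_left hvu, gramDet_comm]⟩
  · rintro _ ⟨a, b, hab, rfl⟩
    have ha := abs_le_div_sqrt_gramDet hD hab.le
    have hb := abs_le_div_sqrt_gramDet hD' (b := a) (by rw [add_comm, hab])
    rw [← gramDet_comm] at hb
    rw [max_comm ‖u‖, ← max_div_div_right (Real.sqrt_nonneg _)]
    exact max_le_max ha hb

/-- For `v₀ = 0` and linearly independent `v₁, v₂ ∈ ℝ^N`,
`Λ(0, v₁, v₂) = max{‖v₁‖, ‖v₂‖} / sqrt(‖v₁‖²‖v₂‖² − ⟨v₁,v₂⟩²)`. -/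
theorem stmt_3 (N : ℕ) (v₁ v₂ : EuclideanSpace ℝ (Fin N))
    (hind : LinearIndependent ℝ ![v₁, v₂])
    (Lam : ℝ)
    (hLam : IsGreatest {c : ℝ | ∃ a b : ℝ, ‖a • v₁ + b • v₂‖ = 1 ∧ c = max |a| |b|} Lam) :
    Lam = max ‖v₁‖ ‖v₂‖ /
      Real.sqrt (‖v₁‖ ^ 2 * ‖v₂‖ ^ 2 - (inner ℝ v₁ v₂ : ℝ) ^ 2) :=
  hLam.unique (isGreatest_max_abs_coeff hind)
end

section
/- Let Δ ⊂ ℝ^m be a linear simplex written as the join of two opposing faces A and B, with join parameter t : Δ → [0,1] the affine function equal to 0 on A and 1 on B. Let u₁, u₂, v : Δ → ℝ^n be smooth maps and define s_i = t·u_i + (1−t)·v for i = 1,2. Then the C⁰-distance satisfies d_{C⁰}(s₁, s₂) ≤ d_{C⁰}(u₁, u₂), and each partial derivative satisfies |∂_j(s₁ − s₂)(x)| ≤ (1/rmin(Δ))·d_{C⁰}(u₁, u₂) + d_{C¹}(u₁, u₂) for all x ∈ Δ, using that the partial derivatives of t are bounded in absolute value by 1/rmin(Δ). -/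
/-! The `v`-terms cancel: `s₁ - s₂ = t • (u₁ - u₂)`, i.e. `u₁ - u₂` damped by a factor in `[0, 1]`
on `Δ`, which gives the `C⁰` bound. By the product rule its derivative in direction `w` is
`t x • D(u₁ - u₂) w + (Dt w) • (u₁ - u₂)`, where `Dt w` is the linear part of `t` applied to `w`. -/

open Set

theorem norm_smul_le_of_mem_Icc {E : Type*} [SeminormedAddCommGroup E] [NormedSpace ℝ E]
    {c : ℝ} (hc : c ∈ Icc (0 : ℝ) 1) (v : E) : ‖c • v‖ ≤ ‖v‖ := by
  rw [norm_smul, Real.norm_of_nonneg hc.1]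
  exact mul_le_of_le_one_left (norm_nonneg v) hc.2

section AffineSmul

variable {𝕜 E F : Type*} [NontriviallyNormedField 𝕜] [CompleteSpace 𝕜]
  [NormedAddCommGroup E] [NormedSpace 𝕜 E] [FiniteDimensional 𝕜 E]
  [NormedAddCommGroup F] [NormedSpace 𝕜 F]

theorem AffineMap.hasFDerivAt_of_finiteDimensional (t : E →ᵃ[𝕜] F) (x : E) :
    HasFDerivAt t (LinearMap.toContinuousLinearMap t.linear) x :=
  (⟨t, t.continuous_of_finiteDimensional⟩ : E →ᴬ[𝕜] F).hasFDerivAt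

theorem AffineMap.fderiv_smul_apply (t : E →ᵃ[𝕜] 𝕜) {u : E → F} {x : E}
    (hu : DifferentiableAt 𝕜 u x) (w : E) :
    fderiv 𝕜 (fun y => t y • u y) x w = t x • fderiv 𝕜 u x w + t.linear w • u x := by
  have h : HasFDerivAt (fun y => t y • u y) _ x :=
    (t.hasFDerivAt_of_finiteDimensional x).smul hu.hasFDerivAt
  rw [h.fderiv]
  simp

end AffineSmul

theorem AffineMap.norm_fderiv_smul_apply_le {E F : Type*}
    [NormedAddCommGroup E] [NormedSpace ℝ E] [FiniteDimensional ℝ E]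
    [NormedAddCommGroup F] [NormedSpace ℝ F]
    (t : E →ᵃ[ℝ] ℝ) {u : E → F} {x : E} (hu : DifferentiableAt ℝ u x)
    (ht : t x ∈ Icc (0 : ℝ) 1) (w : E) :
    ‖fderiv ℝ (fun y => t y • u y) x w‖ ≤ ‖fderiv ℝ u x‖ * ‖w‖ + |t.linear w| * ‖u x‖ := by
  rw [t.fderiv_smul_apply hu]
  calc ‖t x • fderiv ℝ u x w + t.linear w • u x‖
      ≤ ‖t x • fderiv ℝ u x w‖ + ‖t.linear w • u x‖ := norm_add_le _ _
    _ ≤ ‖fderiv ℝ u x w‖ + |t.linear w| * ‖u x‖ := by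
        rw [norm_smul _ (u x), Real.norm_eq_abs]
        gcongr
        exact norm_smul_le_of_mem_Icc ht _
    _ ≤ ‖fderiv ℝ u x‖ * ‖w‖ + |t.linear w| * ‖u x‖ := by
        gcongr
        exact (fderiv ℝ u x).le_opNorm w

theorem stmt_4_general (m n : ℕ)
    (Δ : Set (EuclideanSpace ℝ (Fin m)))
    (t : EuclideanSpace ℝ (Fin m) →ᵃ[ℝ] ℝ)
    (ht01 : ∀ x ∈ Δ, t x ∈ Set.Icc (0 : ℝ) 1)
    (rmin : ℝ)
    (ht' : ∀ j : Fin m, |t.linear (EuclideanSpace.single j 1)| ≤ 1 / rmin)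
    (u₁ u₂ v : EuclideanSpace ℝ (Fin m) → EuclideanSpace ℝ (Fin n))
    (hu₁ : ContDiff ℝ 1 u₁) (hu₂ : ContDiff ℝ 1 u₂)
    (ε₀ ε₁ : ℝ)
    (h0 : ∀ x ∈ Δ, ‖u₁ x - u₂ x‖ ≤ ε₀)
    (h1 : ∀ x ∈ Δ, ‖fderiv ℝ u₁ x - fderiv ℝ u₂ x‖ ≤ ε₁)
    (s₁ s₂ : EuclideanSpace ℝ (Fin m) → EuclideanSpace ℝ (Fin n))
    (hs₁ : ∀ x, s₁ x = t x • u₁ x + (1 - t x) • v x)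
    (hs₂ : ∀ x, s₂ x = t x • u₂ x + (1 - t x) • v x) :
    (∀ x ∈ Δ, ‖s₁ x - s₂ x‖ ≤ ε₀) ∧
    (∀ x ∈ Δ, ∀ j : Fin m,
      ‖fderiv ℝ (fun y => s₁ y - s₂ y) x (EuclideanSpace.single j 1)‖ ≤
        (1 / rmin) * ε₀ + ε₁) := by
  have hdiff : (fun y => s₁ y - s₂ y) = fun y => t y • (u₁ y - u₂ y) := by
    funext y
    rw [hs₁, hs₂, smul_sub]
    abel
  refine ⟨fun x hx => ?_, fun x hx j => ?_⟩
  · rw [congrFun hdiff x]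
    exact (norm_smul_le_of_mem_Icc (ht01 x hx) _).trans (h0 x hx)
  · have hd₁ := hu₁.differentiable one_ne_zero x
    have hd₂ := hu₂.differentiable one_ne_zero x
    have hrmin : 0 ≤ 1 / rmin := (abs_nonneg _).trans (ht' j)
    rw [hdiff]
    calc _ ≤ ‖fderiv ℝ (fun y => u₁ y - u₂ y) x‖ * ‖EuclideanSpace.single j (1 : ℝ)‖
          + |t.linear (EuclideanSpace.single j 1)| * ‖u₁ x - u₂ x‖ :=
          t.norm_fderiv_smul_apply_le (hd₁.sub hd₂) (ht01 x hx) _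
      _ ≤ ε₁ + 1 / rmin * ε₀ := by
          rw [fderiv_fun_sub hd₁ hd₂, PiLp.norm_single, norm_one, mul_one]
          gcongr
          exacts [h1 x hx, ht' j, h0 x hx]
      _ = 1 / rmin * ε₀ + ε₁ := add_comm _ _

/-- interpolation over a join. With `t` the join parameter (affine, `0` on `A`,
`1` on `B`, values in `[0,1]` on `Δ`, partial derivatives bounded by `1/rmin(Δ)`), and
`sᵢ = t·uᵢ + (1−t)·v`, we get `d_{C⁰}(s₁,s₂) ≤ d_{C⁰}(u₁,u₂)` and
`|∂ⱼ(s₁−s₂)(x)| ≤ (1/rmin)·d_{C⁰}(u₁,u₂) + d_{C¹}(u₁,u₂)` on `Δ`. -/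
theorem stmt_4 (m n : ℕ)
    (Δ A B : Set (EuclideanSpace ℝ (Fin m)))
    (hΔ : Δ = convexHull ℝ (A ∪ B))
    (t : EuclideanSpace ℝ (Fin m) →ᵃ[ℝ] ℝ)
    (htA : ∀ x ∈ A, t x = 0) (htB : ∀ x ∈ B, t x = 1)
    (ht01 : ∀ x ∈ Δ, t x ∈ Set.Icc (0 : ℝ) 1)
    (rmin : ℝ) (hrmin : 0 < rmin)
    (ht' : ∀ j : Fin m, |t.linear (EuclideanSpace.single j 1)| ≤ 1 / rmin)
    (u₁ u₂ v : EuclideanSpace ℝ (Fin m) → EuclideanSpace ℝ (Fin n))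
    (hu₁ : ContDiff ℝ 1 u₁) (hu₂ : ContDiff ℝ 1 u₂) (hv : ContDiff ℝ 1 v)
    (ε₀ ε₁ : ℝ)
    (h0 : ∀ x ∈ Δ, ‖u₁ x - u₂ x‖ ≤ ε₀)
    (h1 : ∀ x ∈ Δ, ‖fderiv ℝ u₁ x - fderiv ℝ u₂ x‖ ≤ ε₁)
    (s₁ s₂ : EuclideanSpace ℝ (Fin m) → EuclideanSpace ℝ (Fin n))
    (hs₁ : ∀ x, s₁ x = t x • u₁ x + (1 - t x) • v x)
    (hs₂ : ∀ x, s₂ x = t x • u₂ x + (1 - t x) • v x) :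
    (∀ x ∈ Δ, ‖s₁ x - s₂ x‖ ≤ ε₀) ∧
    (∀ x ∈ Δ, ∀ j : Fin m,
      ‖fderiv ℝ (fun y => s₁ y - s₂ y) x (EuclideanSpace.single j 1)‖ ≤
        (1 / rmin) * ε₀ + ε₁) :=
  stmt_4_general m n Δ t ht01 rmin ht' u₁ u₂ v hu₁ hu₂ ε₀ ε₁ h0 h1 s₁ s₂ hs₁ hs₂
end

section
/- Let Δ ⊂ ℝ^m be a linear simplex spanned as the join of opposing faces A and B. Let v : A → ℝ^n be affine and u₁, u₂ : B → ℝ^n be affine maps, and let s_i : Δ → ℝ^n be the unique affine map agreeing with v on A and with u_i on B, for i = 1,2. Then d_{C⁰}(s₁, s₂) ≤ d_{C⁰}(u₁, u₂), and the derivatives (which are constant linear maps D₁, D₂) satisfy ‖D₁ − D₂‖ ≤ C · d_{C⁰}(u₁, u₂) · Λ(Δ) for a constant C depending only on m and n. -/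
/-! The difference `s₁ - s₂` is affine, so `‖s₁ - s₂‖` is convex and its sublevel sets contain
the convex hull of the vertices; at the vertices it is `0` on `A` and at most `ε` on `B`.
Its linear part maps every edge `v i.succ - v 0` to a vector of norm at most `2ε`, and a unit
vector has coordinates at most `Λ(Δ)` in the edge basis, so `‖D₁ - D₂‖ ≤ 2 m ε Λ(Δ)`. -/

section

variable {E F : Type*} [NormedAddCommGroup F] [NormedSpace ℝ F]

theorem AffineMap.norm_sub_le_of_mem_convexHull [AddCommGroup E] [Module ℝ E]
    (f g : E →ᵃ[ℝ] F) {s : Set E} {ε : ℝ} (h : ∀ x ∈ s, ‖f x - g x‖ ≤ ε) {x : E}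
    (hx : x ∈ convexHull ℝ s) : ‖f x - g x‖ ≤ ε := by
  have hconv : Convex ℝ ((f - g) ⁻¹' Metric.closedBall 0 ε) :=
    (convex_closedBall 0 ε).affine_preimage (f - g)
  simpa using convexHull_min (fun y hy => by simpa using h y hy) hconv hx

theorem AffineMap.norm_linear_sub_apply_sub_le [AddCommGroup E] [Module ℝ E]
    (f g : E →ᵃ[ℝ] F) {p q : E} {ε : ℝ} (hp : ‖f p - g p‖ ≤ ε) (hq : ‖f q - g q‖ ≤ ε) :
    ‖(f.linear - g.linear) (p - q)‖ ≤ 2 * ε := by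
  have hpq : (f.linear - g.linear) (p - q) = (f p - g p) - (f q - g q) := by
    simpa [AffineMap.vsub_linear] using (f -ᵥ g).linearMap_vsub p q
  rw [hpq]
  linarith [norm_sub_le (f p - g p) (f q - g q)]

theorem ContinuousLinearMap.opNorm_le_of_span_eq_top [NormedAddCommGroup E] [NormedSpace ℝ E]
    {ι : Type*} [Fintype ι] (T : E →L[ℝ] F) {e : ι → E}
    (he : Submodule.span ℝ (Set.range e) = ⊤) {δ Λ : ℝ} (hδ : 0 ≤ δ) (hΛ : 0 ≤ Λ)
    (hTe : ∀ i, ‖T (e i)‖ ≤ δ) (hcoef : ∀ c : ι → ℝ, ‖∑ i, c i • e i‖ = 1 → ∀ i, |c i| ≤ Λ) :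
    ‖T‖ ≤ Fintype.card ι * Λ * δ := by
  refine T.opNorm_le_of_unit_norm (by positivity) fun x hx => ?_
  have hx' : x ∈ Submodule.span ℝ (Set.range e) := he ▸ Submodule.mem_top
  obtain ⟨c, rfl⟩ := (Submodule.mem_span_range_iff_exists_fun ℝ).mp hx'
  calc ‖T (∑ i, c i • e i)‖ = ‖∑ i, c i • T (e i)‖ := by simp only [map_sum, map_smul]
    _ ≤ ∑ i, ‖c i • T (e i)‖ := norm_sum_le _ _
    _ ≤ ∑ _i : ι, Λ * δ := Finset.sum_le_sum fun i _ => by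
        rw [norm_smul, Real.norm_eq_abs]
        exact mul_le_mul (hcoef c hx i) (hTe i) (norm_nonneg _) hΛ
    _ = Fintype.card ι * Λ * δ := by simp [mul_assoc]

end

theorem AffineIndependent.span_range_sub_zero_eq_top {k E : Type*} [DivisionRing k]
    [AddCommGroup E] [Module k E] [FiniteDimensional k E] {m : ℕ} {v : Fin (m + 1) → E}
    (hv : AffineIndependent k v) (hm : Module.finrank k E = m) :
    Submodule.span k (Set.range fun i : Fin m => v i.succ - v 0) = ⊤ := by
  have hli : LinearIndependent k fun i : Fin m => v i.succ - v 0 := by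
    have h := ((affineIndependent_iff_linearIndependent_vsub k v 0).mp hv).comp _
      (finSuccAboveEquiv 0).injective
    simpa [Function.comp_def, finSuccAboveEquiv_apply] using h
  exact hli.span_eq_top_of_card_eq_finrank' (by simp [hm])

/-- joins of affine maps. If `s₁, s₂` are affine maps on a simplex `Δ` (vertices
`v`), agreeing on the face `A` (vertices indexed by `I`) and `C⁰`-close on the opposing face
`B` (vertices indexed by `Iᶜ`), then `d_{C⁰}(s₁,s₂) ≤ ε` on `Δ` and their (constant) derivatives
satisfy `‖D₁ − D₂‖ ≤ C · ε · Λ(Δ)` for a constant `C` depending only on `m` and `n`. -/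
theorem stmt_5 (m n : ℕ) :
    ∃ C : ℝ, 0 < C ∧
      ∀ (v : Fin (m + 1) → EuclideanSpace ℝ (Fin m)),
        AffineIndependent ℝ v →
        ∀ I : Finset (Fin (m + 1)), I.Nonempty → Iᶜ.Nonempty →
        ∀ (s₁ s₂ : EuclideanSpace ℝ (Fin m) →ᵃ[ℝ] EuclideanSpace ℝ (Fin n)) (ε Lam : ℝ),
          (∀ x ∈ convexHull ℝ (v '' (I : Set (Fin (m + 1)))), s₁ x = s₂ x) →
          (∀ x ∈ convexHull ℝ (v '' ((Iᶜ : Finset (Fin (m + 1))) : Set (Fin (m + 1)))),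
            ‖s₁ x - s₂ x‖ ≤ ε) →
          IsGreatest {c : ℝ | ∃ lam : Fin m → ℝ,
            ‖∑ i : Fin m, lam i • (v i.succ - v 0)‖ = 1 ∧ ∃ i, c = |lam i|} Lam →
          (∀ x ∈ convexHull ℝ (Set.range v), ‖s₁ x - s₂ x‖ ≤ ε) ∧
          ‖LinearMap.toContinuousLinearMap (s₁.linear - s₂.linear)‖ ≤ C * ε * Lam := by
  refine ⟨2 * m + 1, by positivity, ?_⟩
  intro v hv I _ ⟨k, hk⟩ s₁ s₂ ε Lam hA hB hLam
  have hε : 0 ≤ ε :=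
    (norm_nonneg _).trans (hB (v k) (subset_convexHull ℝ _ ⟨k, by simpa using hk, rfl⟩))
  have hvert : ∀ j, ‖s₁ (v j) - s₂ (v j)‖ ≤ ε := by
    intro j
    by_cases hj : j ∈ I
    · simpa [hA (v j) (subset_convexHull ℝ _ ⟨j, hj, rfl⟩)] using hε
    · exact hB (v j) (subset_convexHull ℝ _ ⟨j, by simpa using hj, rfl⟩)
  have hΛ : 0 ≤ Lam ∧ ∀ c : Fin m → ℝ, ‖∑ i, c i • (v i.succ - v 0)‖ = 1 → ∀ i, |c i| ≤ Lam := by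
    obtain ⟨_, _, i, rfl⟩ := hLam.1
    exact ⟨abs_nonneg _, fun c hc i => hLam.2 ⟨c, hc, i, rfl⟩⟩
  refine ⟨fun x => s₁.norm_sub_le_of_mem_convexHull s₂ (Set.forall_mem_range.mpr hvert), ?_⟩
  calc _ ≤ Fintype.card (Fin m) * Lam * (2 * ε) :=
        ContinuousLinearMap.opNorm_le_of_span_eq_top _ (hv.span_range_sub_zero_eq_top (by simp))
          (by positivity) hΛ.1 (fun i => s₁.norm_linear_sub_apply_sub_le s₂ (hvert _) (hvert 0))
          hΛ.2
    _ ≤ (2 * m + 1) * ε * Lam := by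
        rw [Fintype.card_fin]
        nlinarith [mul_nonneg hε hΛ.1]
end

section
/- Let K be a simplicial complex and K' ⊂ K a subcomplex. The following are equivalent: (1) for each simplex Δ in the star of K', the set of simplices of K' contained in Δ forms a single face of Δ; (2) every simplex Δ ∈ K that equals the convex hull of the union of simplices of K' contained in Δ is itself an element of K'. -/
/-!
(1) ⇒ (2): if `Δ` is the convex hull of the simplices of `K'` it contains, then all of them lie in
the face `F` given by (1), so the hull of `Δ` lies in that of `F`, whence `Δ ⊆ F` and `Δ ∈ K'`.
(2) ⇒ (1): take for `F` the vertices `v` of `Δ` with `{v} ∈ K'`. A face `s ⊆ F` of `K` is the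
union of its vertices, all of which lie in `K'`, so (2) applied to `s` gives `s ∈ K'`.
-/

namespace Geometry.SimplicialComplex

variable {𝕜 E : Type*}

def unionWithin (K' : Set (Finset E)) (Δ : Finset E) : Set E :=
  ⋃ s ∈ {s | s ∈ K' ∧ s ⊆ Δ}, (s : Set E)

variable {K' : Set (Finset E)} {Δ : Finset E}

theorem unionWithin_subset {F : Finset E} (h : ∀ s ∈ K', s ⊆ Δ → s ⊆ F) :
    unionWithin K' Δ ⊆ F :=
  Set.iUnion₂_subset fun s hs => Finset.coe_subset.2 (h s hs.1 hs.2)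

theorem unionWithin_eq_self (hΔ : ∀ v ∈ Δ, {v} ∈ K') : unionWithin K' Δ = Δ := by
  refine subset_antisymm (Set.iUnion₂_subset fun s hs => Finset.coe_subset.2 hs.2) ?_
  intro v hv
  exact Set.mem_iUnion₂.2 ⟨{v}, ⟨hΔ v hv, Finset.singleton_subset_iff.2 hv⟩, by simp⟩

variable [Ring 𝕜] [PartialOrder 𝕜] [AddCommGroup E] [Module 𝕜 E]

theorem exists_mem_subset_of_convexHull_eq (hΔ : Δ.Nonempty)
    (hhull : convexHull 𝕜 (Δ : Set E) = convexHull 𝕜 (unionWithin K' Δ)) :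
    ∃ s ∈ K', s ⊆ Δ := by
  have hne : (unionWithin K' Δ).Nonempty := by
    rw [← convexHull_nonempty_iff (𝕜 := 𝕜), ← hhull, convexHull_nonempty_iff]
    exact Finset.coe_nonempty.2 hΔ
  obtain ⟨x, hx⟩ := hne
  obtain ⟨s, hs, -⟩ := Set.mem_iUnion₂.1 hx
  exact ⟨s, hs⟩

variable {K : SimplicialComplex 𝕜 E}

theorem mem_of_convexHull_eq_unionWithin (hsub : K' ⊆ K.faces) (hΔ : Δ ∈ K.faces)
    {F : Finset E} (hFΔ : F ⊆ Δ) (hF : ∀ s ∈ K.faces, (s ∈ K' ∧ s ⊆ Δ ↔ s ⊆ F))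
    (hhull : convexHull 𝕜 (Δ : Set E) = convexHull 𝕜 (unionWithin K' Δ)) : Δ ∈ K' := by
  obtain ⟨s, hs, hsΔ⟩ := exists_mem_subset_of_convexHull_eq (K.nonempty_of_mem_faces hΔ) hhull
  have hsF : s ⊆ F := (hF s (hsub hs)).1 ⟨hs, hsΔ⟩
  have hFK : F ∈ K.faces := K.down_closed hΔ hFΔ ((K.nonempty_of_mem_faces (hsub hs)).mono hsF)
  have hhullF : convexHull 𝕜 (Δ : Set E) ⊆ convexHull 𝕜 ↑F := by
    rw [hhull]
    exact convexHull_mono <| unionWithin_subset fun t ht htΔ => (hF t (hsub ht)).1 ⟨ht, htΔ⟩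
  exact ((hF Δ hΔ).2 ((face_subset_face_iff hΔ hFK).1 hhullF)).1

theorem exists_face_iff_of_convexHull_eq_imp_mem
    (h : ∀ Δ ∈ K.faces, convexHull 𝕜 (Δ : Set E) = convexHull 𝕜 (unionWithin K' Δ) → Δ ∈ K')
    (hvert : ∀ s ∈ K', ∀ v ∈ s, {v} ∈ K') (Δ : Finset E) :
    ∃ F ⊆ Δ, ∀ s ∈ K.faces, (s ∈ K' ∧ s ⊆ Δ ↔ s ⊆ F) := by
  classical
  refine ⟨Δ.filter (fun v => {v} ∈ K'), Finset.filter_subset _ _, fun s hs => ⟨?_, fun hsF => ?_⟩⟩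
  · rintro ⟨hsK', hsΔ⟩ v hv
    exact Finset.mem_filter.2 ⟨hsΔ hv, hvert s hsK' v hv⟩
  · refine ⟨h s hs ?_, hsF.trans (Finset.filter_subset _ _)⟩
    rw [unionWithin_eq_self fun v hv => (Finset.mem_filter.1 (hsF hv)).2]

end Geometry.SimplicialComplex

open Geometry.SimplicialComplex in
/-- equivalence of the two characterizations of a nice subcomplex `K' ⊆ K`:
(1) for each simplex `Δ` in the star of `K'`, the simplices of `K'` contained in `Δ` are
exactly the faces of a single face `F` of `Δ`; (2) every `Δ ∈ K` equal to the convex hull of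
the union of the simplices of `K'` contained in it belongs to `K'`. -/
theorem stmt_10 (N : ℕ) (K : Geometry.SimplicialComplex ℝ (EuclideanSpace ℝ (Fin N)))
    (K' : Set (Finset (EuclideanSpace ℝ (Fin N))))
    (hsub : K' ⊆ K.faces)
    (hdown : ∀ s ∈ K', ∀ t : Finset (EuclideanSpace ℝ (Fin N)),
      t ⊆ s → t.Nonempty → t ∈ K') :
    (∀ Δ ∈ K.faces,
        (∃ s ∈ K', ((↑Δ : Set (EuclideanSpace ℝ (Fin N))) ∩ ↑s).Nonempty) →
        ∃ F : Finset (EuclideanSpace ℝ (Fin N)), F ⊆ Δ ∧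
          ∀ s ∈ K.faces, (s ∈ K' ∧ s ⊆ Δ ↔ s ⊆ F)) ↔
    (∀ Δ ∈ K.faces,
        convexHull ℝ (↑Δ : Set (EuclideanSpace ℝ (Fin N))) =
          convexHull ℝ (⋃ s ∈ {s | s ∈ K' ∧ s ⊆ Δ},
            (↑s : Set (EuclideanSpace ℝ (Fin N)))) →
        Δ ∈ K') := by
  constructor
  · intro h1 Δ hΔ hhull
    obtain ⟨s, hs, hsΔ⟩ :=
      exists_mem_subset_of_convexHull_eq (K' := K') (K.nonempty_of_mem_faces hΔ) hhull
    obtain ⟨v, hv⟩ := K.nonempty_of_mem_faces (hsub hs)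
    obtain ⟨F, hFΔ, hF⟩ := h1 Δ hΔ ⟨s, hs, v, hsΔ hv, hv⟩
    exact mem_of_convexHull_eq_unionWithin hsub hΔ hFΔ hF hhull
  · intro h2 Δ _ _
    have hvert : ∀ s ∈ K', ∀ v ∈ s, {v} ∈ K' := fun s hs v hv =>
      hdown s hs {v} (Finset.singleton_subset_iff.2 hv) (Finset.singleton_nonempty v)
    exact exists_face_iff_of_convexHull_eq_imp_mem h2 hvert Δ
end

section
/- Let Δ ⊂ ℝ^N be a linear m-simplex (m ≥ 1), let b be its barycenter, and let S be a subdivision of the boundary ∂Δ into linear simplices. Then the collection of joins {conv(b ∪ σ) : σ ∈ S} together with their faces forms a subdivision of Δ (the barycentric cone off): the union of these simplices is Δ, each join conv(b ∪ σ) is a linear simplex of dimension dim(σ)+1, and any two of them intersect in a common face. -/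
/-!
Write points of the simplex in barycentric coordinates and let `c` be those of `b`, all
positive. A point `s • b + (1 - s) • y` with `y` in the facet opposite `v i` has coordinates
`s c + (1 - s) u` with `u i = 0`, so `s` is recovered from the coordinates `t` of the point as
`min_j t_j / c_j`. Conversely the index realising this minimum exhibits every point of the
simplex on a segment from `b` to a facet. Hence the cones over the faces of `S` cover the
simplex, every point other than `b` lies on a single such segment, so two cones meet in the
cone over the common part of their bases, and `b` lies off the affine span of every facet,
which makes each cone a simplex.
-/

open scoped Classical

open Finset

theorem AffineIndependent.insert_of_notMem_affineSpan {k V P : Type*} [DivisionRing k]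
    [AddCommGroup V] [Module k V] [AddTorsor V P] {s : Set P} {p : P}
    (hs : AffineIndependent k ((↑) : s → P)) (hp : p ∉ affineSpan k s) :
    AffineIndependent k ((↑) : ↥(insert p s) → P) := by
  have hmem : ∀ x : {y : ↥(insert p s) // y ≠ ⟨p, s.mem_insert p⟩}, (x : P) ∈ s :=
    fun ⟨⟨x, hx⟩, hne⟩ => hx.resolve_left fun h => hne (Subtype.ext h)
  refine AffineIndependent.affineIndependent_of_notMem_span (i := ⟨p, s.mem_insert p⟩) ?_ ?_
  · refine AffineIndependent.of_set_of_injective (hs.mono ?_) ?_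
    · rintro _ ⟨x, rfl⟩
      exact hmem x
    · exact Subtype.val_injective.comp Subtype.val_injective
  · refine fun h => hp (affineSpan_mono k ?_ h)
    rintro _ ⟨x, hx, rfl⟩
    exact hmem ⟨x, hx⟩

theorem mem_convexHull_insert_iff {E : Type*} [AddCommGroup E] [Module ℝ E] {t : Set E}
    (ht : t.Nonempty) {b x : E} :
    x ∈ convexHull ℝ (insert b t) ↔ ∃ y ∈ convexHull ℝ t, x ∈ segment ℝ b y := by
  rw [convexHull_insert ht, convexJoin_singleton_left]
  simp

theorem exists_min_ratio {ι : Type*} [Fintype ι] [Nonempty ι] {t c : ι → ℝ}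
    (hc : ∀ j, 0 < c j) (hc₁ : ∑ j, c j = 1) (ht₀ : ∀ j, 0 ≤ t j) (ht₁ : ∑ j, t j = 1) :
    ∃ i, ∃ s, 0 ≤ s ∧ s ≤ 1 ∧ t i = s * c i ∧ ∀ j, s * c j ≤ t j := by
  obtain ⟨i, -, hi⟩ := exists_min_image univ (fun j => t j / c j) univ_nonempty
  have hle : ∀ j, t i / c i * c j ≤ t j := fun j =>
    (le_div_iff₀ (hc j)).1 (hi j (mem_univ j))
  refine ⟨i, t i / c i, div_nonneg (ht₀ i) (hc i).le, ?_, (div_mul_cancel₀ _ (hc i).ne').symm, hle⟩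
  calc t i / c i = ∑ j, t i / c i * c j := by rw [← mul_sum, hc₁, mul_one]
    _ ≤ ∑ j, t j := sum_le_sum fun j _ => hle j
    _ = 1 := ht₁

section Weights

variable {ι E : Type*} [Fintype ι] [AddCommGroup E] [Module ℝ E] {v : ι → E}

theorem exists_weights_of_mem_convexHull_range {x : E} (hx : x ∈ convexHull ℝ (Set.range v)) :
    ∃ w : ι → ℝ, (∀ j, 0 ≤ w j) ∧ ∑ j, w j = 1 ∧ ∑ j, w j • v j = x := by
  rw [convexHull_range_eq_exists_affineCombination] at hx
  obtain ⟨s, w, hw₀, hw₁, rfl⟩ := hx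
  have hsum : ∑ j, (s : Set ι).indicator w j = 1 :=
    (sum_indicator_subset w (subset_univ s)).trans hw₁
  refine ⟨(s : Set ι).indicator w, fun j => Set.indicator_nonneg hw₀ j, hsum, ?_⟩
  rw [affineCombination_indicator_subset w v (subset_univ s),
    affineCombination_eq_linear_combination _ _ _ hsum]

theorem smul_sum_add_smul_sum (c u : ι → ℝ) (s r : ℝ) :
    s • ∑ j, c j • v j + r • ∑ j, u j • v j = ∑ j, (s * c j + r * u j) • v j := by
  simp only [smul_sum, ← sum_add_distrib, add_smul, mul_smul]

theorem sum_smul_mem_convexHull_facet {w : ι → ℝ} {i : ι} (hw₀ : ∀ j, 0 ≤ w j)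
    (hwi : w i = 0) (hw₁ : ∑ j, w j = 1) :
    ∑ j, w j • v j ∈ convexHull ℝ (v '' {j | j ≠ i}) := by
  refine mem_convexHull_of_exists_fintype (fun j : {j // j ≠ i} => w j) (fun j => v j)
    (fun j => hw₀ j) ?_ (fun j => Set.mem_image_of_mem v j.2) ?_
  · rw [← hw₁, Fintype.sum_eq_add_sum_subtype_ne _ i, hwi, zero_add]
  · rw [Fintype.sum_eq_add_sum_subtype_ne _ i, hwi, zero_smul, zero_add]

theorem AffineIndependent.eq_of_sum_smul_eq (hv : AffineIndependent ℝ v) {w w' : ι → ℝ}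
    (hw : ∑ j, w j = 1) (hw' : ∑ j, w' j = 1) (h : ∑ j, w j • v j = ∑ j, w' j • v j) :
    w = w' := by
  refine (affineIndependent_iff_eq_of_fintype_affineCombination_eq ℝ v).1 hv w w' hw hw' ?_
  rwa [affineCombination_eq_linear_combination _ _ _ hw,
    affineCombination_eq_linear_combination _ _ _ hw']

theorem AffineIndependent.eq_zero_of_sum_smul_mem_affineSpan (hv : AffineIndependent ℝ v)
    {w : ι → ℝ} (hw : ∑ j, w j = 1) {A : Set ι} (h : ∑ j, w j • v j ∈ affineSpan ℝ (v '' A))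
    {i : ι} (hi : i ∉ A) : w i = 0 :=
  hv.eq_zero_of_affineCombination_mem_affineSpan hw
    (by rwa [affineCombination_eq_linear_combination _ _ _ hw]) (mem_univ i) hi

theorem AffineIndependent.exists_weights_of_mem_convexHull_facet (hv : AffineIndependent ℝ v)
    {i : ι} {x : E} (hx : x ∈ convexHull ℝ (v '' {j | j ≠ i})) :
    ∃ w : ι → ℝ, (∀ j, 0 ≤ w j) ∧ w i = 0 ∧ ∑ j, w j = 1 ∧ ∑ j, w j • v j = x := by
  obtain ⟨w, hw₀, hw₁, rfl⟩ :=
    exists_weights_of_mem_convexHull_range (convexHull_mono (Set.image_subset_range v _) hx)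
  exact ⟨w, hw₀, hv.eq_zero_of_sum_smul_mem_affineSpan hw₁ (convexHull_subset_affineSpan _ hx)
    (by simp), hw₁, rfl⟩

end Weights

section Cone

variable {ι E : Type*} [Fintype ι] [AddCommGroup E] [Module ℝ E] {v : ι → E} {c : ι → ℝ} {b : E}

theorem AffineIndependent.notMem_affineSpan_of_subset_facet (hv : AffineIndependent ℝ v)
    (hc₁ : ∑ j, c j = 1) (hb : b = ∑ j, c j • v j) {i : ι} (hci : c i ≠ 0) {t : Set E}
    (ht : t ⊆ convexHull ℝ (v '' {j | j ≠ i})) : b ∉ affineSpan ℝ t := by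
  intro h
  have hspan : b ∈ affineSpan ℝ (v '' {j | j ≠ i}) := by
    rw [← affineSpan_convexHull]
    exact affineSpan_mono ℝ ht h
  exact hci (hv.eq_zero_of_sum_smul_mem_affineSpan hc₁ (hb ▸ hspan) (by simp))

theorem AffineIndependent.le_of_smul_add_smul_eq (hv : AffineIndependent ℝ v)
    (hc₁ : ∑ j, c j = 1) (hb : b = ∑ j, c j • v j) {i : ι} (hci : 0 < c i) {y y' : E}
    (hy : y ∈ convexHull ℝ (v '' {j | j ≠ i})) (hy' : y' ∈ convexHull ℝ (Set.range v))
    {s r s' r' : ℝ} (hr' : 0 ≤ r') (hsr : s + r = 1) (hsr' : s' + r' = 1)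
    (h : s • b + r • y = s' • b + r' • y') : s' ≤ s := by
  obtain ⟨u, -, hui, hu₁, rfl⟩ := hv.exists_weights_of_mem_convexHull_facet hy
  obtain ⟨u', hu'₀, hu'₁, rfl⟩ := exists_weights_of_mem_convexHull_range hy'
  rw [hb, smul_sum_add_smul_sum, smul_sum_add_smul_sum] at h
  have hwi := congr_fun (hv.eq_of_sum_smul_eq
    (by rw [sum_add_distrib, ← mul_sum, ← mul_sum, hc₁, hu₁, mul_one, mul_one, hsr])
    (by rw [sum_add_distrib, ← mul_sum, ← mul_sum, hc₁, hu'₁, mul_one, mul_one, hsr']) h) i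
  rw [hui, mul_zero, add_zero] at hwi
  have : s' * c i ≤ s * c i := by nlinarith [mul_nonneg hr' (hu'₀ i)]
  exact le_of_mul_le_mul_right this hci

theorem AffineIndependent.eq_of_mem_segment_of_mem_segment (hv : AffineIndependent ℝ v)
    (hc : ∀ j, 0 < c j) (hc₁ : ∑ j, c j = 1) (hb : b = ∑ j, c j • v j) {i i' : ι} {x y y' : E}
    (hy : y ∈ convexHull ℝ (v '' {j | j ≠ i})) (hy' : y' ∈ convexHull ℝ (v '' {j | j ≠ i'}))
    (hx : x ∈ segment ℝ b y) (hx' : x ∈ segment ℝ b y') (hxb : x ≠ b) : y = y' := by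
  obtain ⟨s, r, -, hr, hsr, rfl⟩ := hx
  obtain ⟨s', r', -, hr', hsr', hx'⟩ := hx'
  have hsimplex : ∀ i, convexHull ℝ (v '' {j | j ≠ i}) ⊆ convexHull ℝ (Set.range v) :=
    fun _ => convexHull_mono (Set.image_subset_range v _)
  obtain rfl : s = s' := le_antisymm
    (hv.le_of_smul_add_smul_eq hc₁ hb (hc i') hy' (hsimplex i hy) hr hsr' hsr hx')
    (hv.le_of_smul_add_smul_eq hc₁ hb (hc i) hy (hsimplex i' hy') hr' hsr hsr' hx'.symm)
  obtain rfl : r = r' := by linarith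
  have hr0 : r ≠ 0 := by
    rintro rfl
    obtain rfl : s = 1 := by linarith
    exact hxb (by rw [zero_smul, add_zero, one_smul])
  exact smul_right_injective E hr0 (add_left_cancel hx').symm

theorem exists_mem_segment_facet [Nontrivial ι] (hc : ∀ j, 0 < c j) (hc₁ : ∑ j, c j = 1)
    (hb : b = ∑ j, c j • v j) {x : E} (hx : x ∈ convexHull ℝ (Set.range v)) :
    ∃ i, ∃ y ∈ convexHull ℝ (v '' {j | j ≠ i}), x ∈ segment ℝ b y := by
  obtain ⟨t, ht₀, ht₁, rfl⟩ := exists_weights_of_mem_convexHull_range hx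
  obtain ⟨i, s, hs₀, hs₁, hti, hst⟩ := exists_min_ratio hc hc₁ ht₀ ht₁
  rcases hs₁.lt_or_eq with hs₁ | rfl
  · have hs : 1 - s ≠ 0 := sub_ne_zero.2 hs₁.ne'
    set u := fun j => (t j - s * c j) / (1 - s) with hu
    have hu₁ : ∑ j, u j = 1 := by
      rw [hu, ← sum_div, sum_sub_distrib, ← mul_sum, ht₁, hc₁, mul_one, div_self hs]
    refine ⟨i, ∑ j, u j • v j, sum_smul_mem_convexHull_facet
      (fun j => div_nonneg (sub_nonneg.2 (hst j)) (by linarith)) (by simp [u, hti]) hu₁,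
      s, 1 - s, hs₀, by linarith, by ring, ?_⟩
    rw [hb, smul_sum_add_smul_sum]
    refine sum_congr rfl fun j _ => ?_
    rw [hu, mul_div_cancel₀ _ hs, add_sub_cancel]
  · have htc : t = c := funext fun j => ((sum_eq_sum_iff_of_le fun j _ => by simpa using hst j).1
      (by rw [ht₁, hc₁]) j (mem_univ j)).symm
    obtain ⟨j, hj⟩ := exists_ne i
    exact ⟨i, v j, subset_convexHull ℝ _ (Set.mem_image_of_mem v hj), by
      rw [htc, ← hb]; exact left_mem_segment ℝ b (v j)⟩

theorem AffineIndependent.convexHull_insert_inter_subset (hv : AffineIndependent ℝ v)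
    (hc : ∀ j, 0 < c j) (hc₁ : ∑ j, c j = 1) (hb : b = ∑ j, c j • v j) {t t' u : Set E}
    (ht : t.Nonempty) (ht' : t'.Nonempty) {i i' : ι}
    (hti : t ⊆ convexHull ℝ (v '' {j | j ≠ i})) (hti' : t' ⊆ convexHull ℝ (v '' {j | j ≠ i'}))
    (htu : convexHull ℝ t ∩ convexHull ℝ t' ⊆ convexHull ℝ u) :
    convexHull ℝ (insert b t) ∩ convexHull ℝ (insert b t') ⊆ convexHull ℝ (insert b u) := by
  rintro x ⟨hx, hx'⟩
  by_cases hxb : x = b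
  · rw [hxb]
    exact subset_convexHull ℝ _ (u.mem_insert b)
  obtain ⟨y, hyt, hxy⟩ := (mem_convexHull_insert_iff ht).1 hx
  obtain ⟨y', hyt', hxy'⟩ := (mem_convexHull_insert_iff ht').1 hx'
  have hy : y ∈ convexHull ℝ (v '' {j | j ≠ i}) := convexHull_min hti (convex_convexHull ℝ _) hyt
  have hy' : y' ∈ convexHull ℝ (v '' {j | j ≠ i'}) :=
    convexHull_min hti' (convex_convexHull ℝ _) hyt'
  obtain rfl := hv.eq_of_mem_segment_of_mem_segment hc hc₁ hb hy hy' hxy hxy' hxb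
  refine (convex_convexHull ℝ _).segment_subset (subset_convexHull ℝ _ (u.mem_insert b)) ?_ hxy
  exact convexHull_mono (u.subset_insert b) (htu ⟨hyt, hyt'⟩)

end Cone

/-- barycentric cone off. Given an `m`-simplex with vertices `v`,
barycenter `b`, and a subdivision `S` of its boundary, the joins `conv({b} ∪ σ)` for
`σ ∈ S` cover the simplex, each join is a simplex of one dimension higher (its vertex
set `insert b σ` is affinely independent with `σ.card + 1` vertices), and any two joins
intersect in the common face `conv({b} ∪ (σ ∩ σ'))`. -/
theorem stmt_17 (N m : ℕ) (hm : 1 ≤ m)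
    (v : Fin (m + 1) → EuclideanSpace ℝ (Fin N)) (hv : AffineIndependent ℝ v)
    (b : EuclideanSpace ℝ (Fin N))
    (hb : b = ((m : ℝ) + 1)⁻¹ • ∑ i, v i)
    (S : Geometry.SimplicialComplex ℝ (EuclideanSpace ℝ (Fin N)))
    (hspace : S.space = ⋃ i, convexHull ℝ (v '' {j | j ≠ i}))
    (hfaces : ∀ σ ∈ S.faces, ∃ i,
      (↑σ : Set (EuclideanSpace ℝ (Fin N))) ⊆ convexHull ℝ (v '' {j | j ≠ i})) :
    ((⋃ σ ∈ S.faces,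
        convexHull ℝ (↑(insert b σ) : Set (EuclideanSpace ℝ (Fin N)))) =
      convexHull ℝ (Set.range v)) ∧
    (∀ σ ∈ S.faces,
      AffineIndependent ℝ
        (fun p : ((insert b σ : Finset (EuclideanSpace ℝ (Fin N))) :
            Set (EuclideanSpace ℝ (Fin N))) => (p : EuclideanSpace ℝ (Fin N))) ∧
      (insert b σ).card = σ.card + 1) ∧
    (∀ σ ∈ S.faces, ∀ σ' ∈ S.faces,
      convexHull ℝ (↑(insert b σ) : Set (EuclideanSpace ℝ (Fin N))) ∩
          convexHull ℝ (↑(insert b σ') : Set (EuclideanSpace ℝ (Fin N))) =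
        convexHull ℝ (↑(insert b (σ ∩ σ')) : Set (EuclideanSpace ℝ (Fin N)))) := by
  have : Nontrivial (Fin (m + 1)) := Fin.nontrivial_iff_two_le.2 (by omega)
  set c : Fin (m + 1) → ℝ := fun _ => ((m : ℝ) + 1)⁻¹
  have hc : ∀ j, 0 < c j := fun _ => by positivity
  have hc₁ : ∑ j, c j = 1 := by
    simp only [c, sum_const, card_univ, Fintype.card_fin, nsmul_eq_mul]
    push_cast
    exact mul_inv_cancel₀ (by positivity)
  have hb' : b = ∑ j, c j • v j := by rw [hb, smul_sum]
  have hbv : b ∈ convexHull ℝ (Set.range v) :=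
    mem_convexHull_of_exists_fintype c v (fun j => (hc j).le) hc₁ Set.mem_range_self hb'.symm
  refine ⟨subset_antisymm ?_ fun x hx => ?_, fun σ hσ => ?_, fun σ hσ σ' hσ' => ?_⟩
  · refine Set.iUnion₂_subset fun σ hσ => convexHull_min ?_ (convex_convexHull ℝ _)
    obtain ⟨i, hi⟩ := hfaces σ hσ
    rw [coe_insert]
    exact Set.insert_subset hbv (hi.trans (convexHull_mono (Set.image_subset_range v _)))
  · obtain ⟨i, y, hy, hxy⟩ := exists_mem_segment_facet hc hc₁ hb' hx
    obtain ⟨σ, hσ, hyσ⟩ := S.mem_space_iff.1 (hspace ▸ Set.mem_iUnion.2 ⟨i, hy⟩)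
    refine Set.mem_biUnion hσ ?_
    rw [coe_insert, mem_convexHull_insert_iff (coe_nonempty.2 (S.nonempty_of_mem_faces hσ))]
    exact ⟨y, hyσ, hxy⟩
  · obtain ⟨i, hi⟩ := hfaces σ hσ
    have hbσ := hv.notMem_affineSpan_of_subset_facet hc₁ hb' (hc i).ne' hi
    refine ⟨?_, card_insert_of_notMem fun h => hbσ (subset_affineSpan ℝ _ h)⟩
    rw [coe_insert]
    exact (S.indep hσ).insert_of_notMem_affineSpan hbσ
  · obtain ⟨i, hi⟩ := hfaces σ hσ
    obtain ⟨i', hi'⟩ := hfaces σ' hσ'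
    refine subset_antisymm ?_ (Set.subset_inter (convexHull_mono ?_) (convexHull_mono ?_))
    · push_cast
      exact hv.convexHull_insert_inter_subset hc hc₁ hb'
        (coe_nonempty.2 (S.nonempty_of_mem_faces hσ)) (coe_nonempty.2 (S.nonempty_of_mem_faces hσ'))
        hi hi' (S.inter_subset_convexHull hσ hσ')
    · exact coe_subset.2 (insert_subset_insert b inter_subset_left)
    · exact coe_subset.2 (insert_subset_insert b inter_subset_right)
end
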